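/- Let G be a finite simple graph that is H1-subgraph-free, let x, y, z be three pairwise adjacent vertices (a triangle), and let u be a vertex outside {x, y, z} that is adjacent to x but adjacent to neither y nor z. Then u has degree at most 2 in G. -/

import Mathlib

/- If `u` had two neighbours `a, b` besides `x`, then the edge `xu` with the
pendant pairs `y, z` at `x` and `a, b` at `u` would be a copy of `H1`: the
non-adjacency of `u` to `y` and `z` keeps the six vertices distinct. -/

/-- The graph `H1`: vertices `c1 = 0`, `c2 = 1`, `p1 = 2`, `p2 = 3`,
`p3 = 4`, `p4 = 5`, with edges `c1c2`, `c1p1`, `c1p2`, `c2p3`, `c2p4`. -/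
def H1 : SimpleGraph (Fin 6) :=
  SimpleGraph.fromRel (fun a b =>
    (a = 0 ∧ b = 1) ∨ (a = 0 ∧ b = 2) ∨ (a = 0 ∧ b = 3) ∨
    (a = 1 ∧ b = 4) ∨ (a = 1 ∧ b = 5))

/-- `G` contains `H` as a subgraph: there is an injective map from the vertices
of `H` to those of `G` sending edges of `H` to edges of `G`. -/
def ContainsSubgraph {V W : Type*} (G : SimpleGraph V) (H : SimpleGraph W) : Prop :=
  ∃ f : W → V, Function.Injective f ∧ ∀ a b : W, H.Adj a b → G.Adj (f a) (f b)

theorem containsSubgraph_H1_of_adj {V : Type*} {G : SimpleGraph V} {c₁ c₂ p₁ p₂ p₃ p₄ : V}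
    (hinj : Function.Injective ![c₁, c₂, p₁, p₂, p₃, p₄]) (h : G.Adj c₁ c₂)
    (h₁ : G.Adj c₁ p₁) (h₂ : G.Adj c₁ p₂) (h₃ : G.Adj c₂ p₃) (h₄ : G.Adj c₂ p₄) :
    ContainsSubgraph G H1 := by
  refine ⟨_, hinj, fun i j hij ↦ ?_⟩
  simp only [H1, SimpleGraph.fromRel_adj] at hij
  obtain ⟨-, (⟨rfl, rfl⟩ | ⟨rfl, rfl⟩ | ⟨rfl, rfl⟩ | ⟨rfl, rfl⟩ | ⟨rfl, rfl⟩) |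
    (⟨rfl, rfl⟩ | ⟨rfl, rfl⟩ | ⟨rfl, rfl⟩ | ⟨rfl, rfl⟩ | ⟨rfl, rfl⟩)⟩ := hij <;>
    simp [h, h₁, h₂, h₃, h₄, h.symm, h₁.symm, h₂.symm, h₃.symm, h₄.symm]

theorem Set.exists_pair_mem_ne_of_two_lt_ncard {α : Type*} {s : Set α} (hs : 2 < s.ncard)
    (x : α) : ∃ a ∈ s, ∃ b ∈ s, a ≠ b ∧ a ≠ x ∧ b ≠ x := by
  have hfin : s.Finite := finite_of_ncard_pos (by omega)
  have hsdiff : 1 < (s \ {x}).ncard := by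
    have := le_ncard_sdiff {x} s
    rw [ncard_singleton] at this
    omega
  obtain ⟨a, b, ⟨ha, hax⟩, ⟨hb, hbx⟩, hab⟩ := (one_lt_ncard_iff hfin.sdiff).mp hsdiff
  exact ⟨a, ha, b, hb, hab, hax, hbx⟩

theorem stmt12_general {V : Type*} (G : SimpleGraph V)
    (hfree : ¬ ContainsSubgraph G H1) (x y z u : V)
    (hxy : G.Adj x y) (hxz : G.Adj x z) (hyz : G.Adj y z)
    (hux : G.Adj u x)
    (huy : ¬ G.Adj u y) (huz : ¬ G.Adj u z) :
    (G.neighborSet u).ncard ≤ 2 := by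
  by_contra! h
  obtain ⟨a, hua, b, hub, hab, hax, hbx⟩ := Set.exists_pair_mem_ne_of_two_lt_ncard h x
  refine hfree (containsSubgraph_H1_of_adj ?_ hux.symm hxy hxz hua hub)
  have hyu : y ≠ u := fun e ↦ huz (e ▸ hyz)
  have hzu : z ≠ u := fun e ↦ huy (e ▸ hyz.symm)
  rw [SimpleGraph.mem_neighborSet] at hua hub
  intro i j hij
  fin_cases i <;> fin_cases j <;> simp_all [eq_comm]

/-- In an `H1`-subgraph-free graph, if `x, y, z` form a triangle and `u` is a
vertex outside the triangle adjacent to `x` but to neither `y` nor `z`, then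
`u` has degree at most `2`. -/
theorem stmt12 {V : Type*} [Fintype V] (G : SimpleGraph V)
    (hfree : ¬ ContainsSubgraph G H1) (x y z u : V)
    (hxy : G.Adj x y) (hxz : G.Adj x z) (hyz : G.Adj y z)
    (hu : u ∉ ({x, y, z} : Set V)) (hux : G.Adj u x)
    (huy : ¬ G.Adj u y) (huz : ¬ G.Adj u z) :
    (G.neighborSet u).ncard ≤ 2 :=
  stmt12_general G hfree x y z u hxy hxz hyz hux huy huz
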